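/- Let 𝒰(x) = [[0, U⁺(x)],[U⁻(x), 0]] with U^±(x) = (1 − cos(2πx) ± √3 sin(2πx))/3, and let M(w₁) ∈ SL(2,ℂ) be the monodromy matrix over one period of the system D_x X + w₁ 𝒰(x) X = 0 (with D_x = −i d/dx, X(0) = I, M(w₁) = X(1)). Then there exists ε > 0 such that for all w₁ ∈ (−ε, ε) ∖ {0}, 1 is not an eigenvalue of M(w₁). -/

import Mathlib

/-!
Put `ω = -i w`. Three steps of Picard iteration give
`M(w) = I + ω J₁ + ω² J₂ + O(ω³)` with `J₁ = ∫₀¹ 𝒰` and `J₂ = ∫₀¹ 𝒰(t) ∫₀ᵗ 𝒰`, where the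
remainder is uniform for `|w| ≤ 1` because Grönwall's inequality bounds the solution. Since
`tr 𝒰 = 0`, `tr J₁ = 0`, and `tr J₂ = ½ tr (J₁²) = 1/9` because `∫₀¹ U^± = 1/3`. Hence
`tr M(w) = 2 - w²/9 + O(w³) ≠ 2` for small `w ≠ 0`. Also `tr 𝒰 = 0` gives `det M(w) = 1`, and a
`2 × 2` matrix of determinant `1` has eigenvalue `1` exactly when its trace is `2`.
-/

attribute [local instance] Matrix.normedAddCommGroup Matrix.normedSpace

open Matrix Complex Real

/-- The chiral tunneling matrix `𝒰(x) = [[0,U⁺(x)],[U⁻(x),0]]`. -/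
noncomputable def chiralU (x : ℝ) : Matrix (Fin 2) (Fin 2) ℂ :=
  !![0, (((1 - Real.cos (2 * π * x) + Real.sqrt 3 * Real.sin (2 * π * x)) / 3 : ℝ) : ℂ);
     (((1 - Real.cos (2 * π * x) - Real.sqrt 3 * Real.sin (2 * π * x)) / 3 : ℝ) : ℂ), 0]

open MeasureTheory Set

section MatrixCalculus

variable {n 𝕜 : Type*} [Fintype n] [RCLike 𝕜]

theorem Matrix.norm_mul_le_card_mul (A B : Matrix n n 𝕜) :
    ‖A * B‖ ≤ Fintype.card n * ‖A‖ * ‖B‖ := by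
  refine (Matrix.norm_le_iff (A := A * B) (by positivity)).2 fun i j => ?_
  calc ‖(A * B) i j‖ ≤ ∑ k, ‖A i k‖ * ‖B k j‖ := by
        rw [mul_apply]; exact norm_sum_le_of_le _ fun k _ => (norm_mul _ _).le
    _ ≤ ∑ _k : n, ‖A‖ * ‖B‖ := by
        gcongr <;> exact norm_entry_le_entrywise_sup_norm _
    _ = Fintype.card n * ‖A‖ * ‖B‖ := by
        rw [Finset.sum_const, nsmul_eq_mul, Finset.card_univ, mul_assoc]

theorem Matrix.norm_trace_le_card_mul (A : Matrix n n 𝕜) : ‖A.trace‖ ≤ Fintype.card n * ‖A‖ :=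
  calc ‖A.trace‖ ≤ ∑ _i : n, ‖A‖ :=
        (norm_sum_le _ _).trans (Finset.sum_le_sum fun _ _ => norm_entry_le_entrywise_sup_norm A)
    _ = Fintype.card n * ‖A‖ := by rw [Finset.sum_const, nsmul_eq_mul, Finset.card_univ]

theorem Matrix.norm_one_le [DecidableEq n] : ‖(1 : Matrix n n 𝕜)‖ ≤ 1 :=
  (Matrix.norm_le_iff zero_le_one).2 fun i j => by
    rw [one_apply]; split_ifs <;> simp

theorem Matrix.trace_intervalIntegral {F : ℝ → Matrix n n 𝕜} (hF : Continuous F) (a b : ℝ) :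
    (∫ t in a..b, F t).trace = ∫ t in a..b, (F t).trace :=
  ((traceLinearMap n 𝕜 𝕜).toContinuousLinearMap.intervalIntegral_comp_comm
    (hF.intervalIntegrable a b)).symm

theorem Matrix.intervalIntegral_apply {F : ℝ → Matrix n n 𝕜} (hF : Continuous F) (a b : ℝ)
    (i j : n) : (∫ t in a..b, F t) i j = ∫ t in a..b, F t i j :=
  ((entryLinearMap 𝕜 𝕜 i j).toContinuousLinearMap.intervalIntegral_comp_comm
    (hF.intervalIntegrable a b)).symm

variable {F G : ℝ → Matrix n n 𝕜} {F' G' : Matrix n n 𝕜} {x : ℝ}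

theorem HasDerivAt.matrix_apply (h : HasDerivAt F F' x) (i j : n) :
    HasDerivAt (fun t => F t i j) (F' i j) x :=
  hasDerivAt_pi.1 (hasDerivAt_pi.1 h i) j

theorem HasDerivAt.matrix_mul (hF : HasDerivAt F F' x) (hG : HasDerivAt G G' x) :
    HasDerivAt (fun t => F t * G t) (F' * G x + F x * G') x := by
  refine hasDerivAt_pi.2 fun i => hasDerivAt_pi.2 fun j => ?_
  simp only [mul_apply, Matrix.add_apply, ← Finset.sum_add_distrib]
  exact HasDerivAt.fun_sum fun k _ => (hF.matrix_apply i k).fun_mul (hG.matrix_apply k j)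

theorem HasDerivAt.matrix_trace (h : HasDerivAt F F' x) :
    HasDerivAt (fun t => (F t).trace) F'.trace x :=
  HasDerivAt.fun_sum fun i _ => h.matrix_apply i i

theorem HasDerivAt.det_fin_two {Y : ℝ → Matrix (Fin 2) (Fin 2) 𝕜} {B : Matrix (Fin 2) (Fin 2) 𝕜}
    (h : HasDerivAt Y (B * Y x) x) :
    HasDerivAt (fun t => (Y t).det) (B.trace * (Y x).det) x := by
  simp only [Matrix.det_fin_two]
  refine (((h.matrix_apply 0 0).mul (h.matrix_apply 1 1)).sub
    ((h.matrix_apply 0 1).mul (h.matrix_apply 1 0))).congr_deriv ?_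
  simp only [mul_apply, Fin.sum_univ_two, trace_fin_two]
  ring

end MatrixCalculus

section Volterra

variable {n 𝕜 : Type*} [Fintype n] [RCLike 𝕜] {A F G : ℝ → Matrix n n 𝕜}

noncomputable def volterra (A F : ℝ → Matrix n n 𝕜) (x : ℝ) : Matrix n n 𝕜 :=
  ∫ t in (0 : ℝ)..x, A t * F t

theorem hasDerivAt_volterra (hA : Continuous A) (hF : Continuous F) (x : ℝ) :
    HasDerivAt (volterra A F) (A x * F x) x :=
  ((hA.matrix_mul hF).integral_hasStrictDerivAt 0 x).hasDerivAt

theorem continuous_volterra (hA : Continuous A) (hF : Continuous F) : Continuous (volterra A F) :=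
  continuous_iff_continuousAt.2 fun x => (hasDerivAt_volterra hA hF x).continuousAt

theorem volterra_zero : volterra A F 0 = 0 := intervalIntegral.integral_same

theorem volterra_add_smul (hA : Continuous A) (hF : Continuous F) (hG : Continuous G) (c : 𝕜) :
    volterra A (F + c • G) = volterra A F + c • volterra A G := by
  funext x
  simp only [volterra, Pi.add_apply, Pi.smul_apply, Matrix.mul_add, Matrix.mul_smul]
  rw [intervalIntegral.integral_add (f := fun t => A t * F t) (g := fun t => c • (A t * G t))
      ((hA.matrix_mul hF).intervalIntegrable _ _)
      (((hA.matrix_mul hG).const_smul c).intervalIntegrable _ _),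
    intervalIntegral.integral_smul]

theorem norm_volterra_le {K C : ℝ} (hK : ∀ t ∈ Icc (0 : ℝ) 1, ‖A t‖ ≤ K)
    (hC : ∀ t ∈ Icc (0 : ℝ) 1, ‖F t‖ ≤ C) {x : ℝ} (hx : x ∈ Icc (0 : ℝ) 1) :
    ‖volterra A F x‖ ≤ Fintype.card n * K * C := by
  have hK0 : 0 ≤ K := (norm_nonneg _).trans (hK 0 ⟨le_rfl, zero_le_one⟩)
  have hC0 : 0 ≤ C := (norm_nonneg _).trans (hC 0 ⟨le_rfl, zero_le_one⟩)
  have hbound : ∀ t ∈ uIoc (0 : ℝ) x, ‖A t * F t‖ ≤ Fintype.card n * K * C := fun t ht => by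
    rw [uIoc_of_le hx.1] at ht
    have ht' : t ∈ Icc (0 : ℝ) 1 := ⟨ht.1.le, ht.2.trans hx.2⟩
    calc ‖A t * F t‖ ≤ Fintype.card n * ‖A t‖ * ‖F t‖ := norm_mul_le_card_mul _ _
      _ ≤ Fintype.card n * K * C := by
        have := hK t ht'; have := hC t ht'; gcongr
  have hKC : 0 ≤ Fintype.card n * K * C := by positivity
  calc ‖volterra A F x‖ ≤ Fintype.card n * K * C * |x - 0| :=
        intervalIntegral.norm_integral_le_of_norm_le_const hbound
    _ ≤ Fintype.card n * K * C := by
        rw [sub_zero, abs_of_nonneg hx.1]; exact mul_le_of_le_one_right hKC hx.2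

/-- With `J = ∫₀ᵗ A`, the integrand `tr (A J)` is half the derivative of `tr (J²)`, because
`tr (A J) = tr (J A)`. -/
theorem trace_volterra_volterra_one [DecidableEq n] (hA : Continuous A) (x : ℝ) :
    (volterra A (volterra A 1) x).trace = (volterra A 1 x * volterra A 1 x).trace / 2 := by
  set J := volterra A 1
  have hJ : Continuous J := continuous_volterra hA continuous_one
  have hJ' : ∀ t, HasDerivAt J (A t) t := fun t => by
    simpa using hasDerivAt_volterra hA continuous_one t
  have hderiv : ∀ t ∈ uIcc (0 : ℝ) x,
      HasDerivAt (fun s => (J s * J s).trace / 2) (A t * J t).trace t := fun t _ => by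
    refine (((hJ' t).matrix_mul (hJ' t)).matrix_trace.div_const 2).congr_deriv ?_
    rw [trace_add, trace_mul_comm (J t)]
    ring
  rw [volterra, trace_intervalIntegral (hA.matrix_mul hJ),
    intervalIntegral.integral_eq_sub_of_hasDerivAt hderiv
      ((hA.matrix_mul hJ).matrix_trace.intervalIntegrable _ _)]
  simp [J, volterra_zero]

end Volterra

section LinearODE

variable {n 𝕜 : Type*} [Fintype n] [DecidableEq n] [RCLike 𝕜] {A Y : ℝ → Matrix n n 𝕜} {ω : 𝕜}

theorem eq_one_add_smul_volterra (hA : Continuous A)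
    (hY : ∀ x, HasDerivAt Y (ω • (A x * Y x)) x) (hY0 : Y 0 = 1) :
    Y = 1 + ω • volterra A Y := by
  have hYc : Continuous Y := continuous_iff_continuousAt.2 fun x => (hY x).continuousAt
  have hderiv : ∀ x, HasDerivAt (fun x => Y x - ω • volterra A Y x) 0 x := fun x => by
    have := (hY x).sub ((hasDerivAt_volterra hA hYc x).const_smul ω)
    rwa [sub_self] at this
  funext x
  have := is_const_of_deriv_eq_zero (fun x => (hderiv x).differentiableAt)
    (fun x => (hderiv x).deriv) x 0
  rw [volterra_zero, hY0, smul_zero, sub_zero, sub_eq_iff_eq_add] at this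
  rw [this, Pi.add_apply, Pi.smul_apply, Pi.one_apply, add_comm]

theorem eq_picard_expansion (hA : Continuous A)
    (hY : ∀ x, HasDerivAt Y (ω • (A x * Y x)) x) (hY0 : Y 0 = 1) :
    Y 1 = 1 + ω • volterra A 1 1 + ω ^ 2 • volterra A (volterra A 1) 1
      + ω ^ 3 • volterra A (volterra A (volterra A Y)) 1 := by
  have hYc : Continuous Y := continuous_iff_continuousAt.2 fun x => (hY x).continuousAt
  have hV := continuous_volterra hA hYc
  have hY' := eq_one_add_smul_volterra hA hY hY0
  have h1 : volterra A Y = volterra A 1 + ω • volterra A (volterra A Y) := by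
    conv_lhs => rw [hY']
    exact volterra_add_smul hA continuous_one hV ω
  have h2 : volterra A (volterra A Y) =
      volterra A (volterra A 1) + ω • volterra A (volterra A (volterra A Y)) := by
    conv_lhs => rw [h1]
    exact volterra_add_smul hA (continuous_volterra hA continuous_one)
      (continuous_volterra hA hV) ω
  conv_lhs => rw [hY', h1, h2]
  simp only [Pi.add_apply, Pi.smul_apply, Pi.one_apply]
  module

theorem norm_le_exp_of_hasDerivAt {K : ℝ} (hK : ∀ t ∈ Icc (0 : ℝ) 1, ‖A t‖ ≤ K)
    (hY : ∀ x, HasDerivAt Y (ω • (A x * Y x)) x) (hY0 : Y 0 = 1) {x : ℝ}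
    (hx : x ∈ Icc (0 : ℝ) 1) : ‖Y x‖ ≤ Real.exp (Fintype.card n * K * ‖ω‖ * x) := by
  have hYc : Continuous Y := continuous_iff_continuousAt.2 fun x => (hY x).continuousAt
  have hbound : ∀ t ∈ Ico (0 : ℝ) 1,
      ‖ω • (A t * Y t)‖ ≤ Fintype.card n * K * ‖ω‖ * ‖Y t‖ + 0 := fun t ht => by
    have hKt := hK t (Ico_subset_Icc_self ht)
    calc ‖ω • (A t * Y t)‖ ≤ ‖ω‖ * (Fintype.card n * ‖A t‖ * ‖Y t‖) := by
          rw [norm_smul]; gcongr; exact norm_mul_le_card_mul _ _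
      _ ≤ ‖ω‖ * (Fintype.card n * K * ‖Y t‖) := by gcongr
      _ = Fintype.card n * K * ‖ω‖ * ‖Y t‖ + 0 := by ring
  have := norm_le_gronwallBound_of_norm_deriv_right_le hYc.continuousOn
    (fun t _ => (hY t).hasDerivWithinAt) (hY0 ▸ norm_one_le) hbound x hx
  rwa [gronwallBound_ε0, one_mul, sub_zero] at this

theorem exists_norm_sub_picard_le (hA : Continuous A) :
    ∃ C, ∀ ω : 𝕜, ‖ω‖ ≤ 1 → ∀ Y : ℝ → Matrix n n 𝕜,
      (∀ x, HasDerivAt Y (ω • (A x * Y x)) x) → Y 0 = 1 →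
      ‖Y 1 - (1 + ω • volterra A 1 1 + ω ^ 2 • volterra A (volterra A 1) 1)‖ ≤ C * ‖ω‖ ^ 3 := by
  obtain ⟨K, hK⟩ := isCompact_Icc.exists_bound_of_continuousOn hA.continuousOn
  have hK0 : 0 ≤ K := (norm_nonneg _).trans (hK 0 ⟨le_rfl, zero_le_one⟩)
  set c : ℝ := Fintype.card n * K
  refine ⟨c * (c * (c * Real.exp c)), fun ω hω Y hY hY0 => ?_⟩
  have hY1 : ∀ x ∈ Icc (0 : ℝ) 1, ‖Y x‖ ≤ Real.exp c := fun x hx =>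
    (norm_le_exp_of_hasDerivAt hK hY hY0 hx).trans <| Real.exp_le_exp.2 <| by
      have : ‖ω‖ * x ≤ 1 := mul_le_one₀ hω hx.1 hx.2
      calc c * ‖ω‖ * x = c * (‖ω‖ * x) := mul_assoc _ _ _
        _ ≤ c := mul_le_of_le_one_right (by positivity) this
  have hY2 := fun x hx => norm_volterra_le hK hY1 (x := x) hx
  have hY3 := fun x hx => norm_volterra_le hK hY2 (x := x) hx
  have hY4 := norm_volterra_le hK hY3 (x := 1) ⟨zero_le_one, le_rfl⟩
  rw [eq_picard_expansion hA hY hY0, add_sub_cancel_left, norm_smul, norm_pow, mul_comm]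
  gcongr

end LinearODE

section FinTwo

variable {𝕜 : Type*} [RCLike 𝕜]

theorem Matrix.det_one_sub_fin_two (M : Matrix (Fin 2) (Fin 2) 𝕜) :
    (1 - M).det = 1 - M.trace + M.det := by
  simp only [Matrix.det_fin_two, trace_fin_two, Matrix.sub_apply, one_apply_eq, one_apply_ne,
    ne_eq, zero_ne_one, one_ne_zero, not_false_eq_true]
  ring

theorem Matrix.one_mem_spectrum_iff_trace_eq_two {M : Matrix (Fin 2) (Fin 2) 𝕜} (h : M.det = 1) :
    (1 : 𝕜) ∈ spectrum 𝕜 M ↔ M.trace = 2 := by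
  rw [spectrum.mem_iff, map_one, isUnit_iff_isUnit_det, isUnit_iff_ne_zero, not_not,
    det_one_sub_fin_two, h, sub_add_eq_add_sub, sub_eq_zero, eq_comm]
  norm_num

theorem det_eq_one_of_trace_eq_zero {A Y : ℝ → Matrix (Fin 2) (Fin 2) 𝕜} {ω : 𝕜}
    (hA : ∀ x, (A x).trace = 0) (hY : ∀ x, HasDerivAt Y (ω • (A x * Y x)) x) (hY0 : Y 0 = 1)
    (x : ℝ) : (Y x).det = 1 := by
  have hderiv : ∀ x, HasDerivAt (fun t => (Y t).det) 0 x := fun x => by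
    have := HasDerivAt.det_fin_two (B := ω • A x) (by rw [smul_mul_assoc]; exact hY x)
    rwa [trace_smul, hA, smul_zero, zero_mul] at this
  rw [is_const_of_deriv_eq_zero (fun x => (hderiv x).differentiableAt)
    (fun x => (hderiv x).deriv) x 0, hY0, det_one]

end FinTwo

theorem continuous_chiralU : Continuous chiralU := by
  refine continuous_matrix fun i j => ?_
  fin_cases i <;> fin_cases j <;> simp [chiralU] <;> fun_prop

theorem trace_chiralU (x : ℝ) : (chiralU x).trace = 0 := by
  simp [chiralU, trace_fin_two]

theorem integral_one_sub_cos_add_mul_sin (s : ℝ) :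
    ∫ x in (0 : ℝ)..1, 1 - Real.cos (2 * π * x) + s * Real.sin (2 * π * x) = 1 := by
  have h2π : 2 * π ≠ 0 := by positivity
  have hcos : ∫ x in (0 : ℝ)..1, Real.cos (2 * π * x) = 0 := by
    simp [intervalIntegral.integral_comp_mul_left (fun x => Real.cos x) h2π]
  have hsin : ∫ x in (0 : ℝ)..1, Real.sin (2 * π * x) = 0 := by
    simp [intervalIntegral.integral_comp_mul_left (fun x => Real.sin x) h2π]
  have hi : ∀ f : ℝ → ℝ, Continuous f → IntervalIntegrable f volume 0 1 :=
    fun f hf => hf.intervalIntegrable 0 1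
  rw [intervalIntegral.integral_add (hi _ (by fun_prop)) (hi _ (by fun_prop)),
    intervalIntegral.integral_sub (hi _ (by fun_prop)) (hi _ (by fun_prop)),
    intervalIntegral.integral_const_mul, hcos, hsin]
  norm_num

theorem volterra_chiralU_one : volterra chiralU 1 1 = !![0, 1 / 3; 1 / 3, 0] := by
  ext i j
  rw [volterra, intervalIntegral_apply (continuous_chiralU.matrix_mul continuous_one)]
  have hminus := integral_one_sub_cos_add_mul_sin (-√3)
  simp only [neg_mul, ← sub_eq_add_neg] at hminus
  fin_cases i <;> fin_cases j <;>
    simp [chiralU, -Complex.ofReal_div, intervalIntegral.integral_ofReal,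
      integral_one_sub_cos_add_mul_sin, hminus]

theorem trace_volterra_chiralU_one : (volterra chiralU 1 1).trace = 0 := by
  simp [volterra_chiralU_one, trace_fin_two]

theorem trace_volterra_volterra_chiralU_one :
    (volterra chiralU (volterra chiralU 1) 1).trace = 1 / 9 := by
  rw [trace_volterra_volterra_one continuous_chiralU, volterra_chiralU_one]
  norm_num [trace_fin_two]

theorem exists_norm_trace_monodromy_sub_le :
    ∃ C, ∀ w : ℝ, |w| ≤ 1 → ∀ Y : ℝ → Matrix (Fin 2) (Fin 2) ℂ,
      (∀ x, HasDerivAt Y ((-(I * w)) • (chiralU x * Y x)) x) → Y 0 = 1 →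
      ‖(Y 1).trace - (2 - (w : ℂ) ^ 2 / 9)‖ ≤ C * |w| ^ 3 := by
  obtain ⟨C, hC⟩ := exists_norm_sub_picard_le (𝕜 := ℂ) continuous_chiralU
  refine ⟨2 * C, fun w hw Y hY hY0 => ?_⟩
  have hω : ‖-(I * w)‖ = |w| := by simp
  have htrace : (Y 1).trace - (2 - (w : ℂ) ^ 2 / 9) = (Y 1 - (1 + (-(I * w)) • volterra chiralU 1 1
      + (-(I * w)) ^ 2 • volterra chiralU (volterra chiralU 1) 1)).trace := by
    rw [trace_sub, trace_add, trace_add, trace_smul, trace_smul, trace_one,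
      trace_volterra_chiralU_one, trace_volterra_volterra_chiralU_one]
    simp only [Fintype.card_fin, smul_eq_mul, mul_pow, neg_sq, I_sq]
    ring
  calc ‖(Y 1).trace - (2 - (w : ℂ) ^ 2 / 9)‖
      ≤ Fintype.card (Fin 2) * ‖Y 1 - (1 + (-(I * w)) • volterra chiralU 1 1
          + (-(I * w)) ^ 2 • volterra chiralU (volterra chiralU 1) 1)‖ :=
        htrace ▸ norm_trace_le_card_mul _
    _ ≤ 2 * (C * |w| ^ 3) := by
        rw [Fintype.card_fin, Nat.cast_ofNat, ← hω]
        gcongr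
        exact hC _ (hω ▸ hw) Y hY hY0
    _ = 2 * C * |w| ^ 3 := by ring

theorem exists_trace_monodromy_ne_two :
    ∃ ε > (0 : ℝ), ∀ w : ℝ, |w| < ε → w ≠ 0 → ∀ Y : ℝ → Matrix (Fin 2) (Fin 2) ℂ,
      (∀ x, HasDerivAt Y ((-(I * w)) • (chiralU x * Y x)) x) → Y 0 = 1 → (Y 1).trace ≠ 2 := by
  obtain ⟨C, hC⟩ := exists_norm_trace_monodromy_sub_le
  refine ⟨min 1 (1 / (9 * (|C| + 1))), by positivity, fun w hw hw0 Y hY hY0 htr => ?_⟩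
  have hbound := hC w (hw.le.trans (min_le_left _ _)) Y hY hY0
  rw [htr, sub_sub_cancel, norm_div, norm_pow, Complex.norm_real, Real.norm_eq_abs, sq_abs]
    at hbound
  norm_num at hbound
  have hsmall : |C| * |w| < 1 / 9 := by
    have := (lt_div_iff₀ (by positivity)).1 (hw.trans_le (min_le_right _ _))
    nlinarith [abs_nonneg w]
  have hw2 : 0 < w ^ 2 := by positivity
  refine lt_irrefl (w ^ 2 / 9) ?_
  calc w ^ 2 / 9 ≤ C * |w| ^ 3 := hbound
    _ ≤ |C| * |w| * w ^ 2 := by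
        rw [pow_succ', sq_abs, ← mul_assoc]
        exact mul_le_mul_of_nonneg_right (mul_le_mul_of_nonneg_right (le_abs_self C)
          (abs_nonneg w)) hw2.le
    _ < 1 / 9 * w ^ 2 := by gcongr
    _ = w ^ 2 / 9 := by ring

/-- For the monodromy matrix `M(w₁) = X_{w₁}(1)` of the chiral system
`D_x X + w₁ 𝒰 X = 0` (i.e. `X' = −i w₁ 𝒰 X`, `X(0) = I`), there is `ε > 0` such that
for all small nonzero `w₁`, `1` is not an eigenvalue of `M(w₁)`. -/
theorem stmt9 (X : ℝ → ℝ → Matrix (Fin 2) (Fin 2) ℂ)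
    (hX : ∀ w x, HasDerivAt (X w) ((-(Complex.I * w)) • (chiralU x * X w x)) x)
    (hX0 : ∀ w, X w 0 = 1) :
    ∃ ε > (0 : ℝ), ∀ w : ℝ, w ∈ Set.Ioo (-ε) ε → w ≠ 0 →
      (1 : ℂ) ∉ spectrum ℂ (X w 1) := by
  obtain ⟨ε, hε, hne⟩ := exists_trace_monodromy_ne_two
  refine ⟨ε, hε, fun w hw hw0 => ?_⟩
  rw [one_mem_spectrum_iff_trace_eq_two
    (det_eq_one_of_trace_eq_zero trace_chiralU (hX w) (hX0 w) 1)]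
  exact hne w (abs_lt.2 hw) hw0 (X w) (hX w) (hX0 w)
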